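/- Let z₁, z₂ > 0 and define F_{z₁,z₂}(r) = arcosh(1 + (r² + (z₁ − z₂)²)/(2·z₁·z₂)). Then for every γ ≥ 1 and every r ≥ 0, F_{z₁,z₂}(γ·r) ≤ γ·F_{z₁,z₂}(r). -/

import Mathlib

/-- The inverse hyperbolic cosine. -/
noncomputable def arcosh (x : ℝ) : ℝ := Real.log (x + Real.sqrt (x ^ 2 - 1))

/-- The hyperbolic distance, in the Poincaré half-space model, between two points
with heights `z₁, z₂` whose horizontal coordinates are at Euclidean distance `r`. -/
noncomputable def F (z₁ z₂ r : ℝ) : ℝ :=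
  arcosh (1 + (r ^ 2 + (z₁ - z₂) ^ 2) / (2 * z₁ * z₂))

/-! Since `cosh (F z₁ z₂ r) - 1 = (r ^ 2 + (z₁ - z₂) ^ 2) / (2 * z₁ * z₂)`, replacing `r` by `γ * r`
multiplies `cosh F - 1` by at most `γ ^ 2`. On the other hand `cosh (γ * a) - 1 ≥ γ ^ 2 * (cosh a - 1)`,
because every nonconstant term of the power series of `cosh` is scaled by `γ ^ (2 * n) ≥ γ ^ 2`.
Monotonicity of `cosh` on `[0, ∞)` concludes. -/

open Real

lemma sq_mul_cosh_sub_one_le_cosh_mul_sub_one {γ : ℝ} (hγ : 1 ≤ |γ|) (a : ℝ) :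
    γ ^ 2 * (cosh a - 1) ≤ cosh (γ * a) - 1 := by
  have hγ2 : 1 ≤ γ ^ 2 := one_le_sq_iff_one_le_abs γ |>.mpr hγ
  have hseries := (hasSum_cosh (γ * a)).sub ((hasSum_cosh a).mul_left (γ ^ 2))
  have hconst : HasSum (fun n : ℕ ↦ if n = 0 then 1 - γ ^ 2 else 0) (1 - γ ^ 2) :=
    hasSum_ite_eq 0 _
  have := hasSum_le (fun n ↦ ?_) hconst hseries
  · linarith
  rcases Nat.eq_zero_or_pos n with rfl | hn
  · simp
  · rw [if_neg hn.ne', mul_pow, pow_mul γ, ← mul_div_assoc, ← sub_div, ← sub_mul]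
    have : γ ^ 2 ≤ (γ ^ 2) ^ n := le_self_pow₀ hγ2 hn.ne'
    have : 0 ≤ a ^ (2 * n) := by rw [pow_mul]; positivity
    positivity

section

variable {z₁ z₂ : ℝ}

lemma one_le_one_add_sq_add_sq_div (hz : 0 < z₁ * z₂) (r : ℝ) :
    1 ≤ 1 + (r ^ 2 + (z₁ - z₂) ^ 2) / (2 * z₁ * z₂) := by
  have : 0 < 2 * z₁ * z₂ := by rw [mul_assoc]; positivity
  simp only [le_add_iff_nonneg_right]
  positivity

-- `arcosh` unfolds to Mathlib's `Real.arcosh`, so its lemmas apply to `F` directly.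
lemma cosh_F (hz : 0 < z₁ * z₂) (r : ℝ) :
    cosh (F z₁ z₂ r) = 1 + (r ^ 2 + (z₁ - z₂) ^ 2) / (2 * z₁ * z₂) :=
  cosh_arcosh (one_le_one_add_sq_add_sq_div hz r)

lemma F_nonneg (hz : 0 < z₁ * z₂) (r : ℝ) : 0 ≤ F z₁ z₂ r :=
  arcosh_nonneg (one_le_one_add_sq_add_sq_div hz r)

lemma sq_mul_add_sq_div_le {γ : ℝ} (hγ : 1 ≤ |γ|) (hz : 0 < z₁ * z₂) (r : ℝ) :
    ((γ * r) ^ 2 + (z₁ - z₂) ^ 2) / (2 * z₁ * z₂)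
      ≤ γ ^ 2 * ((r ^ 2 + (z₁ - z₂) ^ 2) / (2 * z₁ * z₂)) := by
  have hγ2 : 1 ≤ γ ^ 2 := one_le_sq_iff_one_le_abs γ |>.mpr hγ
  rw [← mul_div_assoc, div_le_div_iff_of_pos_right (by rw [mul_assoc]; positivity)]
  nlinarith [sq_nonneg (z₁ - z₂)]

end

theorem F_scale_ge_one_general (z₁ z₂ : ℝ) (hz₁ : 0 < z₁) (hz₂ : 0 < z₂)
    (γ : ℝ) (hγ : 1 ≤ γ) (r : ℝ) :
    F z₁ z₂ (γ * r) ≤ γ * F z₁ z₂ r := by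
  have hz : 0 < z₁ * z₂ := mul_pos hz₁ hz₂
  have hγ' : 1 ≤ |γ| := hγ.trans (le_abs_self γ)
  have hcosh : cosh (F z₁ z₂ (γ * r)) ≤ cosh (γ * F z₁ z₂ r) :=
    calc cosh (F z₁ z₂ (γ * r))
        ≤ 1 + γ ^ 2 * (cosh (F z₁ z₂ r) - 1) := by
          rw [cosh_F hz, cosh_F hz, add_sub_cancel_left]
          linarith [sq_mul_add_sq_div_le hγ' hz r]
      _ ≤ cosh (γ * F z₁ z₂ r) := by
          linarith [sq_mul_cosh_sub_one_le_cosh_mul_sub_one hγ' (F z₁ z₂ r)]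
  rwa [cosh_le_cosh, abs_of_nonneg (F_nonneg hz _),
    abs_of_nonneg (mul_nonneg (by linarith) (F_nonneg hz r))] at hcosh

/-- Lemma 3.3 (1): for `γ ≥ 1`, `F_{z₁,z₂}(γ·r) ≤ γ·F_{z₁,z₂}(r)`. -/
theorem F_scale_ge_one (z₁ z₂ : ℝ) (hz₁ : 0 < z₁) (hz₂ : 0 < z₂)
    (γ : ℝ) (hγ : 1 ≤ γ) (r : ℝ) (hr : 0 ≤ r) :
    F z₁ z₂ (γ * r) ≤ γ * F z₁ z₂ r :=
  F_scale_ge_one_general z₁ z₂ hz₁ hz₂ γ hγ r
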